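/- Let (X,ν) be a measure space, let ρ: X → [0,∞) be measurable, and let θ ≥ 1, s̄ > 0, s ≥ 0, C > 0, R0 > 1 be constants such that ν({x∈X : R^θ ≤ ρ(x) ≤ 2R^θ}) ≤ C R^{s̄}(log R)^{s} for every R > R0. Then there exists a constant C' > 0 such that for every nonincreasing function f : [0,∞) → [0,∞) and every R > 2^{1/θ} R0 one has ∫_{{ρ > R^θ}} f(ρ(x)^{1/θ}) dν(x) ≤ C' ∫_{R/2^{1/θ}}^{∞} f(z) z^{s̄−1} (log z)^{s} dz. -/
import Mathlib


open MeasureTheory Set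

/-- the dyadic-annuli comparison lemma (adaptation of
Grigor'yan–Sun, formula (2.19)): if the `ν`-measure of the annuli
`{R^θ ≤ ρ ≤ 2R^θ}` is controlled by `C R^{s̄} (log R)^s`, then the integral
of a nonincreasing function of `ρ^{1/θ}` over `{ρ > R^θ}` is controlled by a
one-dimensional weighted integral. -/
theorem statement13 {X : Type*} [MeasurableSpace X] (ν : Measure X)
    (ρ : X → ℝ) (hρmeas : Measurable ρ) (hρnn : ∀ x, 0 ≤ ρ x)
    (θ sbar s C R0 : ℝ) (hθ : 1 ≤ θ) (hsbar : 0 < sbar) (hs : 0 ≤ s)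
    (hC : 0 < C) (hR0 : 1 < R0)
    (hann : ∀ R : ℝ, R0 < R →
      ν {x | R ^ θ ≤ ρ x ∧ ρ x ≤ 2 * R ^ θ}
        ≤ ENNReal.ofReal (C * R ^ sbar * Real.log R ^ s)) :
    ∃ C' : ℝ, 0 < C' ∧
      ∀ f : ℝ → ℝ, AntitoneOn f (Ici (0:ℝ)) → (∀ z, 0 ≤ f z) →
      ∀ R : ℝ, 2 ^ (1 / θ) * R0 < R →
        ∫⁻ x in {x | R ^ θ < ρ x}, ENNReal.ofReal (f (ρ x ^ (1 / θ))) ∂ν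
          ≤ ENNReal.ofReal C' *
            ∫⁻ z in Ioi (R / 2 ^ (1 / θ)),
              ENNReal.ofReal (f z * z ^ (sbar - 1) * Real.log z ^ s) := by
  classical
  have hθ0 : 0 < θ := lt_of_lt_of_le one_pos hθ
  have hθ0' : θ ≠ 0 := ne_of_gt hθ0
  have h1θ : 0 < 1 / θ := by positivity
  have hq1 : 1 < (2:ℝ) ^ (1 / θ) := by
    have := Real.rpow_lt_rpow_of_exponent_lt (x := 2) one_lt_two h1θ (y := 0)
    simpa using this
  set q : ℝ := (2:ℝ) ^ (1 / θ) with hq_def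
  have hq0 : 0 < q := lt_trans one_pos hq1
  have hlogq : 0 < Real.log q := Real.log_pos hq1
  have hR00 : 0 < R0 := lt_trans one_pos hR0
  have hlogR0 : 0 < Real.log R0 := Real.log_pos hR0
  set K : ℝ := 1 + Real.log q / Real.log R0 with hK_def
  have hdivpos : 0 < Real.log q / Real.log R0 := div_pos hlogq hlogR0
  have hK0 : 0 < K := by rw [hK_def]; linarith
  set c1 : ℝ := q ^ (-|sbar - 1|) with hc1_def
  have hc10 : 0 < c1 := Real.rpow_pos_of_pos hq0 _
  have hKs0 : 0 < K ^ (-s) := Real.rpow_pos_of_pos hK0 _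
  have h1q : 0 < 1 - 1 / q := by
    rw [sub_pos, div_lt_one hq0]; exact hq1
  set c3 : ℝ := c1 * K ^ (-s) * (1 - 1 / q) with hc3_def
  have hc30 : 0 < c3 := mul_pos (mul_pos hc10 hKs0) h1q
  refine ⟨C / c3, div_pos hC hc30, ?_⟩
  intro f hf hfnn R hR
  have hR0R : R0 < R := by nlinarith
  have hRpos : 0 < R := lt_trans hR00 hR0R
  have hRq : R0 < R / q := (lt_div_iff₀ hq0).2 (by nlinarith)
  -- the dyadic radii
  set r : ℕ → ℝ := fun k => (2:ℝ) ^ ((k:ℝ) / θ) * R with hr_def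
  have hr0 : ∀ k, 0 < r k := fun k => mul_pos (Real.rpow_pos_of_pos two_pos _) hRpos
  have hrR : ∀ k, R ≤ r k := by
    intro k
    have h1 : (1:ℝ) ≤ 2 ^ ((k:ℝ) / θ) := by
      rw [show (1:ℝ) = (2:ℝ) ^ (0:ℝ) by simp]
      exact Real.rpow_le_rpow_of_exponent_le one_le_two (by positivity)
    simp only [hr_def]
    nlinarith
  have hrR0 : ∀ k, R0 < r k := fun k => lt_of_lt_of_le hR0R (hrR k)
  have hr1 : ∀ k, 1 < r k := fun k => lt_trans hR0 (hrR0 k)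
  have hlogr : ∀ k, 0 < Real.log (r k) := fun k => Real.log_pos (hr1 k)
  have hrθ : ∀ k, r k ^ θ = 2 ^ (k:ℝ) * R ^ θ := by
    intro k
    simp only [hr_def]
    rw [Real.mul_rpow (by positivity) hRpos.le,
      ← Real.rpow_mul (by norm_num : (0:ℝ) ≤ 2), div_mul_cancel₀ _ hθ0']
  have hqr : ∀ k, q * r k = r (k + 1) := by
    intro k
    simp only [hr_def, hq_def]
    rw [← mul_assoc, ← Real.rpow_add two_pos, Nat.cast_add, Nat.cast_one,
      show 1 / θ + (k:ℝ) / θ = ((k:ℝ) + 1) / θ by ring]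
  have hrmono : ∀ {j k : ℕ}, j ≤ k → r j ≤ r k := by
    intro j k h
    simp only [hr_def]
    have hjk : (j:ℝ) / θ ≤ (k:ℝ) / θ := by
      gcongr
    exact mul_le_mul_of_nonneg_right
      (Real.rpow_le_rpow_of_exponent_le one_le_two hjk) hRpos.le
  -- annuli
  set A : ℕ → Set X := fun k => {x | r k ^ θ ≤ ρ x ∧ ρ x ≤ 2 * r k ^ θ} with hA_def
  have hAmeas : ∀ k, MeasurableSet (A k) := fun k => hρmeas measurableSet_Icc
  have hcover : {x | R ^ θ < ρ x} ⊆ ⋃ k, A k := by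
    intro x hx
    have hx' : R ^ θ < ρ x := hx
    have hRθ : 0 < R ^ θ := Real.rpow_pos_of_pos hRpos θ
    have hex : ∃ n : ℕ, ρ x ≤ 2 ^ (n + 1) * R ^ θ := by
      obtain ⟨n, hn⟩ := pow_unbounded_of_one_lt (ρ x / R ^ θ) (by norm_num : (1:ℝ) < 2)
      refine ⟨n, ?_⟩
      have h2 : ρ x < 2 ^ n * R ^ θ := by
        rw [div_lt_iff₀ hRθ] at hn; linarith
      have h3 : (2:ℝ) ^ n ≤ 2 ^ (n + 1) := by
        apply pow_le_pow_right₀ one_le_two; omega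
      nlinarith
    set k := Nat.find hex with hk_def
    have hk2 : ρ x ≤ 2 ^ (k + 1) * R ^ θ := Nat.find_spec hex
    have hk1 : (2:ℝ) ^ k * R ^ θ ≤ ρ x := by
      rcases Nat.eq_zero_or_pos k with h0 | hpos
      · rw [h0]; simpa using hx'.le
      · have hmin := Nat.find_min hex (Nat.sub_lt hpos one_pos)
        rw [← hk_def] at hmin
        push_neg at hmin
        have : k - 1 + 1 = k := Nat.succ_pred_eq_of_pos hpos
        rw [this] at hmin
        exact hmin.le
    refine mem_iUnion.2 ⟨k, ?_⟩
    show r k ^ θ ≤ ρ x ∧ ρ x ≤ 2 * r k ^ θ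
    rw [hrθ k, Real.rpow_natCast]
    refine ⟨hk1, ?_⟩
    have h2k : (2:ℝ) ^ (k + 1) = 2 * 2 ^ k := by ring
    rw [h2k] at hk2
    linarith
  -- intervals
  set I : ℕ → Set ℝ := fun k => Ioc (r k / q) (r k) with hI_def
  have hImeas : ∀ k, MeasurableSet (I k) := fun k => measurableSet_Ioc
  have hIdisj : Pairwise (Function.onFun Disjoint I) := by
    have key : ∀ j k : ℕ, j < k → Disjoint (I j) (I k) := by
      intro j k h
      refine Set.disjoint_left.2 fun z hzj hzk => ?_
      have h1 : z ≤ r j := hzj.2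
      have h2 : r k / q < z := hzk.1
      have h3 : r (j + 1) ≤ r k := hrmono h
      have h4 : r j ≤ r k / q := by
        rw [le_div_iff₀ hq0, mul_comm]
        calc q * r j = r (j + 1) := hqr j
          _ ≤ r k := h3
      linarith
    intro j k hjk
    rcases hjk.lt_or_gt with h | h
    · exact key _ _ h
    · exact (key _ _ h).symm
  have hIsub : (⋃ k, I k) ⊆ Ioi (R / q) := by
    intro z hz
    obtain ⟨k, hk⟩ := mem_iUnion.1 hz
    have h5 : R / q ≤ r k / q := by gcongr; exact hrR k
    exact lt_of_le_of_lt h5 hk.1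
  -- the per-annulus term
  set T : ℕ → ℝ := fun k => f (r k) * (C * r k ^ sbar * Real.log (r k) ^ s) with hT_def
  have hA_bound : ∀ k, ∫⁻ x in A k, ENNReal.ofReal (f (ρ x ^ (1 / θ))) ∂ν
      ≤ ENNReal.ofReal (T k) := by
    intro k
    have hstep : ∀ x ∈ A k,
        ENNReal.ofReal (f (ρ x ^ (1 / θ))) ≤ ENNReal.ofReal (f (r k)) := by
      intro x hx
      apply ENNReal.ofReal_le_ofReal
      have hle : r k ≤ ρ x ^ (1 / θ) := by
        have h1 : (r k ^ θ) ^ (1 / θ) ≤ ρ x ^ (1 / θ) :=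
          Real.rpow_le_rpow (Real.rpow_nonneg (hr0 k).le _) hx.1 h1θ.le
        rwa [← Real.rpow_mul (hr0 k).le, mul_one_div_cancel hθ0', Real.rpow_one] at h1
      exact hf (mem_Ici.2 (hr0 k).le) (mem_Ici.2 (le_trans (hr0 k).le hle)) hle
    calc ∫⁻ x in A k, ENNReal.ofReal (f (ρ x ^ (1 / θ))) ∂ν
        ≤ ∫⁻ _x in A k, ENNReal.ofReal (f (r k)) ∂ν := setLIntegral_mono' (hAmeas k) hstep
      _ = ENNReal.ofReal (f (r k)) * ν (A k) := setLIntegral_const _ _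
      _ ≤ ENNReal.ofReal (f (r k)) * ENNReal.ofReal (C * r k ^ sbar * Real.log (r k) ^ s) :=
          mul_le_mul_right (hann (r k) (hrR0 k)) _
      _ = ENNReal.ofReal (T k) := by
          rw [← ENNReal.ofReal_mul (hfnn _)]
  -- the per-interval lower bound
  have hI_bound : ∀ k, ENNReal.ofReal (c3 / C * T k)
      ≤ ∫⁻ z in I k, ENNReal.ofReal (f z * z ^ (sbar - 1) * Real.log z ^ s) := by
    intro k
    set b : ℝ := f (r k) * (c1 * r k ^ (sbar - 1)) * (K ^ (-s) * Real.log (r k) ^ s)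
      with hb_def
    have hbnn : 0 ≤ b :=
      mul_nonneg (mul_nonneg (hfnn _) (mul_nonneg hc10.le (Real.rpow_nonneg (hr0 k).le _)))
        (mul_nonneg hKs0.le (Real.rpow_nonneg (hlogr k).le _))
    have hpt : ∀ z ∈ I k,
        ENNReal.ofReal b ≤ ENNReal.ofReal (f z * z ^ (sbar - 1) * Real.log z ^ s) := by
      intro z hz
      obtain ⟨hz1, hz2⟩ := hz
      have hzR0 : R0 < z := lt_trans (lt_of_lt_of_le hRq (by gcongr; exact hrR k)) hz1
      have hz0 : 0 < z := lt_trans hR00 hzR0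
      have hz1' : 1 < z := lt_trans hR0 hzR0
      have hlogz : 0 < Real.log z := Real.log_pos hz1'
      apply ENNReal.ofReal_le_ofReal
      have hfz : f (r k) ≤ f z := hf (mem_Ici.2 hz0.le) (mem_Ici.2 (hr0 k).le) hz2
      have hpow : c1 * r k ^ (sbar - 1) ≤ z ^ (sbar - 1) := by
        rcases le_total 1 sbar with h1s | h1s
        · have habs : |sbar - 1| = sbar - 1 := abs_of_nonneg (by linarith)
          have hmon : (r k / q) ^ (sbar - 1) ≤ z ^ (sbar - 1) :=
            Real.rpow_le_rpow (by positivity) hz1.le (by linarith)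
          calc c1 * r k ^ (sbar - 1) = (r k / q) ^ (sbar - 1) := by
                rw [Real.div_rpow (hr0 k).le hq0.le, hc1_def, habs,
                  Real.rpow_neg hq0.le, mul_comm, div_eq_mul_inv]
            _ ≤ z ^ (sbar - 1) := hmon
        · have hc11 : c1 ≤ 1 :=
            Real.rpow_le_one_of_one_le_of_nonpos hq1.le (neg_nonpos.2 (abs_nonneg _))
          calc c1 * r k ^ (sbar - 1) ≤ 1 * r k ^ (sbar - 1) :=
                mul_le_mul_of_nonneg_right hc11 (Real.rpow_nonneg (hr0 k).le _)
            _ = r k ^ (sbar - 1) := one_mul _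
            _ ≤ z ^ (sbar - 1) := Real.rpow_le_rpow_of_nonpos hz0 hz2 (by linarith)
      have hlog : K ^ (-s) * Real.log (r k) ^ s ≤ Real.log z ^ s := by
        have h1 : Real.log (r k) ≤ Real.log z + Real.log q := by
          have hrzq : r k ≤ z * q := by
            rw [div_lt_iff₀ hq0] at hz1; linarith
          calc Real.log (r k) ≤ Real.log (z * q) := Real.log_le_log (hr0 k) hrzq
            _ = Real.log z + Real.log q := Real.log_mul hz0.ne' hq0.ne'
        have h2 : Real.log q ≤ Real.log q / Real.log R0 * Real.log z := by
          have hlz : Real.log R0 ≤ Real.log z := Real.log_le_log hR00 hzR0.le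
          rw [div_mul_eq_mul_div, le_div_iff₀ hlogR0]
          exact mul_le_mul_of_nonneg_left hlz hlogq.le
        have h3 : Real.log (r k) ≤ K * Real.log z := by
          rw [hK_def, add_mul, one_mul]; linarith
        have h4 : Real.log (r k) ^ s ≤ (K * Real.log z) ^ s :=
          Real.rpow_le_rpow (hlogr k).le h3 hs
        have h5 : (K * Real.log z) ^ s = K ^ s * Real.log z ^ s :=
          Real.mul_rpow hK0.le hlogz.le
        calc K ^ (-s) * Real.log (r k) ^ s
            ≤ K ^ (-s) * (K ^ s * Real.log z ^ s) := by
              rw [← h5]; exact mul_le_mul_of_nonneg_left h4 hKs0.le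
          _ = Real.log z ^ s := by
              rw [← mul_assoc, ← Real.rpow_add hK0, neg_add_cancel, Real.rpow_zero, one_mul]
      calc b ≤ f z * z ^ (sbar - 1) * (K ^ (-s) * Real.log (r k) ^ s) := by
            apply mul_le_mul_of_nonneg_right _
              (mul_nonneg hKs0.le (Real.rpow_nonneg (hlogr k).le _))
            exact mul_le_mul hfz hpow
              (mul_nonneg hc10.le (Real.rpow_nonneg (hr0 k).le _)) (hfnn z)
        _ ≤ f z * z ^ (sbar - 1) * Real.log z ^ s :=
            mul_le_mul_of_nonneg_left hlog
              (mul_nonneg (hfnn z) (Real.rpow_nonneg hz0.le _))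
    have hrk : r k ^ (sbar - 1) * r k = r k ^ sbar := by
      rw [Real.rpow_sub (hr0 k), Real.rpow_one, div_mul_cancel₀ _ (hr0 k).ne']
    have heq : c3 / C * T k = b * (r k - r k / q) := by
      have h7 : b * (r k - r k / q)
          = f (r k) * (r k ^ (sbar - 1) * r k) * Real.log (r k) ^ s
            * (c1 * K ^ (-s) * (1 - 1 / q)) := by
        simp only [hb_def]
        field_simp
      rw [h7, hrk, ← hc3_def]
      simp only [hT_def]
      field_simp
    calc ENNReal.ofReal (c3 / C * T k)
        = ENNReal.ofReal b * ENNReal.ofReal (r k - r k / q) := by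
          rw [heq, ENNReal.ofReal_mul hbnn]
      _ = ENNReal.ofReal b * volume (I k) := by rw [hI_def]; simp [Real.volume_Ioc]
      _ = ∫⁻ _z in I k, ENNReal.ofReal b := (setLIntegral_const _ _).symm
      _ ≤ ∫⁻ z in I k, ENNReal.ofReal (f z * z ^ (sbar - 1) * Real.log z ^ s) :=
          setLIntegral_mono' (hImeas k) hpt
  -- assemble everything
  calc ∫⁻ x in {x | R ^ θ < ρ x}, ENNReal.ofReal (f (ρ x ^ (1 / θ))) ∂ν
      ≤ ∫⁻ x in ⋃ k, A k, ENNReal.ofReal (f (ρ x ^ (1 / θ))) ∂ν :=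
        lintegral_mono_set hcover
    _ ≤ ∑' k, ∫⁻ x in A k, ENNReal.ofReal (f (ρ x ^ (1 / θ))) ∂ν :=
        lintegral_iUnion_le _ _
    _ ≤ ∑' k, ENNReal.ofReal (C / c3) * ENNReal.ofReal (c3 / C * T k) := by
        refine ENNReal.tsum_le_tsum fun k => ?_
        refine le_trans (hA_bound k) (le_of_eq ?_)
        rw [← ENNReal.ofReal_mul (div_pos hC hc30).le]
        congr 1
        field_simp
    _ = ENNReal.ofReal (C / c3) * ∑' k, ENNReal.ofReal (c3 / C * T k) :=
        ENNReal.tsum_mul_left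
    _ ≤ ENNReal.ofReal (C / c3)
          * ∑' k, ∫⁻ z in I k, ENNReal.ofReal (f z * z ^ (sbar - 1) * Real.log z ^ s) :=
        mul_le_mul_right (ENNReal.tsum_le_tsum hI_bound) _
    _ = ENNReal.ofReal (C / c3)
          * ∫⁻ z in ⋃ k, I k, ENNReal.ofReal (f z * z ^ (sbar - 1) * Real.log z ^ s) := by
        rw [lintegral_iUnion hImeas hIdisj]
    _ ≤ ENNReal.ofReal (C / c3)
          * ∫⁻ z in Ioi (R / q), ENNReal.ofReal (f z * z ^ (sbar - 1) * Real.log z ^ s) :=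
        mul_le_mul_right (lintegral_mono_set hIsub) _
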